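/- arXiv:1601.07583 — 4 statements merged into one kernel-verified Lean document; each statement's English description precedes it below -/
import Mathlib

section
/- For every real number k with k ≥ 2√2 and every real c with 0 ≤ c ≤ 1, one has |k + √(k² - 48c + 64c²)| ≥ 4√c, where √ of a negative real is interpreted via the complex square root (equivalently: if k² - 48c + 64c² ≥ 0 then k + √(k² - 48c + 64c²) ≥ 4√c, and if k² - 48c + 64c² < 0 then |3 - 4c| ≥ 1). -/
/-!
Since `k ≥ 2√2` gives `k² ≥ 8`, the quantity `D = k² - 48c + 64c²` is at least
`8(2c - 1)(4c - 1)`. If `D ≥ 0`, then `(k + √D)² ≥ k² + D ≥ 16 - 48c + 64c² = 16c + 16(2c - 1)²`.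
If `D < 0`, then `(2c - 1)(4c - 1) < 0` forces `c < 1/2`, so `3 - 4c > 1`.
-/

lemma eight_le_sq_of_two_mul_sqrt_two_le {k : ℝ} (hk : 2 * √2 ≤ k) : 8 ≤ k ^ 2 := by
  have h2 : √2 ^ 2 = 2 := Real.sq_sqrt (by norm_num)
  nlinarith [Real.sqrt_nonneg 2]

lemma four_mul_sqrt_le_add_sqrt {k c : ℝ} (hk : 8 ≤ k ^ 2) (hk0 : 0 ≤ k)
    (hD : 0 ≤ k ^ 2 - 48 * c + 64 * c ^ 2) :
    4 * √c ≤ k + √(k ^ 2 - 48 * c + 64 * c ^ 2) := by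
  have h16 : 4 * √c = √(16 * c) := by
    rw [Real.sqrt_mul (by norm_num), show (16 : ℝ) = 4 ^ 2 by norm_num, Real.sqrt_sq (by norm_num)]
  rw [h16, Real.sqrt_le_iff]
  have hs := Real.sq_sqrt hD
  have hs0 := Real.sqrt_nonneg (k ^ 2 - 48 * c + 64 * c ^ 2)
  exact ⟨by positivity, by nlinarith [mul_nonneg hk0 hs0, sq_nonneg (2 * c - 1)]⟩

lemma lt_half_of_quadratic_neg {k c : ℝ} (hk : 8 ≤ k ^ 2)
    (hD : k ^ 2 - 48 * c + 64 * c ^ 2 < 0) : c < 1 / 2 := by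
  nlinarith

theorem stmt_0_general (k c : ℝ) (hk : k ≥ 2 * Real.sqrt 2) :
    (k ^ 2 - 48 * c + 64 * c ^ 2 ≥ 0 →
      k + Real.sqrt (k ^ 2 - 48 * c + 64 * c ^ 2) ≥ 4 * Real.sqrt c) ∧
    (k ^ 2 - 48 * c + 64 * c ^ 2 < 0 → |3 - 4 * c| ≥ 1) := by
  have hk8 := eight_le_sq_of_two_mul_sqrt_two_le hk
  have hk0 : 0 ≤ k := le_trans (by positivity) hk
  refine ⟨four_mul_sqrt_le_add_sqrt hk8 hk0, fun hD => ?_⟩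
  have hc := lt_half_of_quadratic_neg hk8 hD
  rw [abs_of_pos (by linarith)]
  linarith

theorem stmt_0 (k c : ℝ) (hk : k ≥ 2 * Real.sqrt 2) (hc0 : 0 ≤ c) (hc1 : c ≤ 1) :
    (k ^ 2 - 48 * c + 64 * c ^ 2 ≥ 0 →
      k + Real.sqrt (k ^ 2 - 48 * c + 64 * c ^ 2) ≥ 4 * Real.sqrt c) ∧
    (k ^ 2 - 48 * c + 64 * c ^ 2 < 0 → |3 - 4 * c| ≥ 1) :=
  stmt_0_general k c hk
end

section
/- For real k > 3, the substitution v ↦ -4(3v + 4k²)/(v + 12) transforms the integral ∫ from -12 to -k(k-√(k²+16))/2 of dv/√(-(v+12)(v² + k²v - 4k²)) into the integral ∫ from -∞ to -k(k+√(k²+16))/2 of dv/√(-(v+12)(v² + k²v - 4k²)); i.e., these two improper integrals are equal. -/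
/-!
The paper's substitution `v ↦ -4(3v + 4k²)/(v + 12)` is the Möbius involution
`v ↦ -12 + m/(v + 12)` with `m = 144 - 16k² = (r₁ + 12)(r₂ + 12)`, where `r₁ < -12 < r₂` are the
roots of `v² + k²v - 4k²`. It swaps `r₁` and `r₂` and sends `-12` to `∞`, so it maps `(-12, r₂)`
bijectively onto `(-∞, r₁)`, and it transforms the cubic `P` under the square root as
`P(φ v) = φ'(v)² P(v)`. Hence `|φ'| / √(P ∘ φ) = 1 / √P` and the change of variables formula
identifies the two integrals.
-/

open Set MeasureTheory

theorem setIntegral_image_one_div_sqrt_eq {s : Set ℝ} (hs : MeasurableSet s) {φ φ' P : ℝ → ℝ}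
    (hφ : ∀ x ∈ s, HasDerivWithinAt φ (φ' x) s x) (hinj : InjOn φ s) (hφ' : ∀ x ∈ s, φ' x ≠ 0)
    (hP : ∀ x ∈ s, P (φ x) = φ' x ^ 2 * P x) :
    ∫ y in φ '' s, 1 / √(P y) = ∫ x in s, 1 / √(P x) := by
  rw [integral_image_eq_integral_abs_deriv_smul hs hφ hinj]
  refine setIntegral_congr_fun hs fun x hx => ?_
  rw [smul_eq_mul, hP x hx, Real.sqrt_mul (sq_nonneg _), Real.sqrt_sq_eq_abs, mul_one_div,
    div_mul_cancel_left₀ (abs_ne_zero.mpr (hφ' x hx)), one_div]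

noncomputable def inversionAbout (c m x : ℝ) : ℝ := c + m / (x - c)

section inversionAbout

variable {c m x : ℝ}

theorem inversionAbout_inversionAbout (hm : m ≠ 0) (hx : x ≠ c) :
    inversionAbout c m (inversionAbout c m x) = x := by
  have hxc : x - c ≠ 0 := sub_ne_zero.mpr hx
  simp only [inversionAbout, add_sub_cancel_left]
  field_simp
  ring

theorem hasDerivAt_inversionAbout (hx : x ≠ c) :
    HasDerivAt (inversionAbout c m) (-m / (x - c) ^ 2) x := by
  have hxc : x - c ≠ 0 := sub_ne_zero.mpr hx
  have h : HasDerivAt (fun y => c + m * (y - c)⁻¹) (m * (-1 / (x - c) ^ 2)) x :=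
    (((hasDerivAt_id' x).sub_const c).inv hxc).const_mul m |>.const_add c
  simp only [← div_eq_mul_inv] at h
  exact h.congr_deriv (by ring)

theorem bijOn_inversionAbout_Ioo_Iio {r₁ r₂ : ℝ} (h₁ : r₁ < c) (h₂ : c < r₂) :
    BijOn (inversionAbout c ((r₁ - c) * (r₂ - c))) (Ioo c r₂) (Iio r₁) := by
  have hm : (r₁ - c) * (r₂ - c) ≠ 0 := mul_ne_zero (by linarith) (by linarith)
  refine InvOn.bijOn (f' := inversionAbout c ((r₁ - c) * (r₂ - c))) ⟨?_, ?_⟩ ?_ ?_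
  · exact fun x hx => inversionAbout_inversionAbout hm hx.1.ne'
  · exact fun y hy => inversionAbout_inversionAbout hm (hy.trans h₁).ne
  · rintro x ⟨hcx, hxr⟩
    have hx : 0 < x - c := sub_pos.mpr hcx
    simp only [inversionAbout, mem_Iio]
    rw [← lt_sub_iff_add_lt', div_lt_iff₀ hx]
    nlinarith
  · intro y (hy : y < r₁)
    have hy : y - c < 0 := by linarith
    simp only [inversionAbout, mem_Ioo, lt_add_iff_pos_right, ← lt_sub_iff_add_lt']
    refine ⟨div_pos_of_neg_of_neg (by nlinarith) hy, ?_⟩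
    rw [div_lt_iff_of_neg hy]
    nlinarith

theorem cubic_inversionAbout (r₁ r₂ : ℝ) (hx : x ≠ c) :
    let φ := inversionAbout c ((r₁ - c) * (r₂ - c))
    (φ x - c) * (φ x - r₁) * (φ x - r₂) =
      (-((r₁ - c) * (r₂ - c)) / (x - c) ^ 2) ^ 2 * ((x - c) * (x - r₁) * (x - r₂)) := by
  have hxc : x - c ≠ 0 := sub_ne_zero.mpr hx
  simp only [inversionAbout]
  field_simp
  ring

end inversionAbout

theorem stmt_12 (k : ℝ) (hk : 3 < k) :
    ∫ v in Set.Ioo (-12 : ℝ) (-k * (k - Real.sqrt (k ^ 2 + 16)) / 2),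
        1 / Real.sqrt (-(v + 12) * (v ^ 2 + k ^ 2 * v - 4 * k ^ 2)) =
    ∫ v in Set.Iio (-k * (k + Real.sqrt (k ^ 2 + 16)) / 2),
        1 / Real.sqrt (-(v + 12) * (v ^ 2 + k ^ 2 * v - 4 * k ^ 2)) := by
  have hs : √(k ^ 2 + 16) ^ 2 = k ^ 2 + 16 := Real.sq_sqrt (by positivity)
  have hs5 : 5 < √(k ^ 2 + 16) := by nlinarith [Real.sqrt_nonneg (k ^ 2 + 16)]
  have h₁ : -k * (k + √(k ^ 2 + 16)) / 2 < -12 := by nlinarith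
  have h₂ : -12 < -k * (k - √(k ^ 2 + 16)) / 2 := by nlinarith
  set r₁ := -k * (k + √(k ^ 2 + 16)) / 2
  set r₂ := -k * (k - √(k ^ 2 + 16)) / 2
  have hfactor : ∀ v, -(v + 12) * (v ^ 2 + k ^ 2 * v - 4 * k ^ 2) =
      -((v - -12) * (v - r₁) * (v - r₂)) := fun v => by
    linear_combination (-(v + 12) * k ^ 2 / 4) * hs
  have hbij := bijOn_inversionAbout_Ioo_Iio h₁ h₂
  rw [← hbij.image_eq, setIntegral_image_one_div_sqrt_eq measurableSet_Ioo
    (fun x hx => (hasDerivAt_inversionAbout hx.1.ne').hasDerivWithinAt) hbij.injOn]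
  · intro x hx
    exact div_ne_zero (neg_ne_zero.mpr (mul_ne_zero (by linarith) (by linarith)))
      (pow_ne_zero _ (sub_ne_zero.mpr hx.1.ne'))
  · intro x hx
    rw [hfactor, hfactor, cubic_inversionAbout r₁ r₂ hx.1.ne']
    ring
end

section
/- For every positive real k ≠ 3, ∫₀¹ dc/√(c(1-c)(64c² - 48c + k²)) = ∫_{-12}^{-k(k-√(16+k²))/2} dv/√(-(v+12)(v² + k²v - 4k²)). -/
/-!
Put `S = √(16 + k²)`, `A = kS - k² + 24` and `t(c) = ((k + S)c - k) / (k + (S - k)c)`, the inverse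
of the substitution `c = k(1 + t) / (k + S + (k - S)t)`, which maps `(0, 1)` increasingly onto
`(-1, 1)`. Then `v = -12 + A t² / 2` maps `(0, 1)` two-to-one onto the interval on the right,
folding at `c = k / (k + S)` where `t = 0`. The roots of `v² + k²v - 4k²` are `-k(k ± S)/2`, and
each factor of `-(v + 12)(v² + k²v - 4k²)` pulls back to a factor of `c(1 - c)(64c² - 48c + k²)`
times a power of `t` and of the denominator, which yields `|dv| / √(…v…) = 2 dc / √(…c…)`.
Each of the two branches therefore carries half of the left integral. Working with lower Lebesgue
integrals, the change of variables needs no integrability.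
-/

open Set MeasureTheory

theorem lintegral_image_eq_ofReal_mul_of_abs_deriv_mul {s : Set ℝ} {f f' F G : ℝ → ℝ} {c : ℝ}
    (hc : 0 ≤ c) (hs : MeasurableSet s) (hf' : ∀ x ∈ s, HasDerivWithinAt f (f' x) s x)
    (hf : InjOn f s) (hFG : ∀ x ∈ s, |f' x| * G (f x) = c * F x) :
    ∫⁻ y in f '' s, ENNReal.ofReal (G y) = ENNReal.ofReal c * ∫⁻ x in s, ENNReal.ofReal (F x) := by
  rw [lintegral_image_eq_lintegral_abs_deriv_mul hs hf' hf,
    ← lintegral_const_mul' _ _ ENNReal.ofReal_ne_top]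
  refine setLIntegral_congr_fun hs fun x hx => ?_
  rw [← ENNReal.ofReal_mul (abs_nonneg _), hFG x hx, ENNReal.ofReal_mul hc]

theorem lintegral_Ioo_eq_of_fold {f f' F G : ℝ → ℝ} {a m b : ℝ} (ham : a < m) (hmb : m < b)
    (hfc : ContinuousOn f (Icc a b)) (hf : ∀ x ∈ Ioo a b, HasDerivAt f (f' x) x)
    (hf'_neg : ∀ x ∈ Ioo a m, f' x < 0) (hf'_pos : ∀ x ∈ Ioo m b, 0 < f' x) (hfab : f a = f b)
    (hFG : ∀ x ∈ Ioo a b, x ≠ m → |f' x| * G (f x) = 2 * F x) :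
    ∫⁻ x in Ioo a b, ENNReal.ofReal (F x) = ∫⁻ y in Ioo (f m) (f b), ENNReal.ofReal (G y) := by
  have hsub_left : Ioo a m ⊆ Ioo a b := Ioo_subset_Ioo_right hmb.le
  have hsub_right : Ioo m b ⊆ Ioo a b := Ioo_subset_Ioo_left ham.le
  have hfc_left : ContinuousOn f (Icc a m) := hfc.mono (Icc_subset_Icc_right hmb.le)
  have hfc_right : ContinuousOn f (Icc m b) := hfc.mono (Icc_subset_Icc_left ham.le)
  have hanti : StrictAntiOn f (Icc a m) :=
    strictAntiOn_of_deriv_neg (convex_Icc a m) hfc_left fun x hx => by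
      rw [interior_Icc] at hx
      rw [(hf x (hsub_left hx)).deriv]
      exact hf'_neg x hx
  have hmono : StrictMonoOn f (Icc m b) :=
    strictMonoOn_of_deriv_pos (convex_Icc m b) hfc_right fun x hx => by
      rw [interior_Icc] at hx
      rw [(hf x (hsub_right hx)).deriv]
      exact hf'_pos x hx
  have hleft : ∫⁻ y in Ioo (f m) (f b), ENNReal.ofReal (G y) =
      2 * ∫⁻ x in Ioo a m, ENNReal.ofReal (F x) := by
    rw [← hfab, ← hfc_left.image_Ioo_of_strictAntiOn ham.le hanti, ← ENNReal.ofReal_ofNat 2]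
    exact lintegral_image_eq_ofReal_mul_of_abs_deriv_mul zero_le_two measurableSet_Ioo
      (fun x hx => (hf x (hsub_left hx)).hasDerivWithinAt) (hanti.injOn.mono Ioo_subset_Icc_self)
      fun x hx => hFG x (hsub_left hx) hx.2.ne
  have hright : ∫⁻ y in Ioo (f m) (f b), ENNReal.ofReal (G y) =
      2 * ∫⁻ x in Ioo m b, ENNReal.ofReal (F x) := by
    rw [← hfc_right.image_Ioo_of_strictMonoOn hmb.le hmono, ← ENNReal.ofReal_ofNat 2]
    exact lintegral_image_eq_ofReal_mul_of_abs_deriv_mul zero_le_two measurableSet_Ioo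
      (fun x hx => (hf x (hsub_right hx)).hasDerivWithinAt) (hmono.injOn.mono Ioo_subset_Icc_self)
      fun x hx => hFG x (hsub_right hx) hx.1.ne'
  have hhalves : ∫⁻ x in Ioo a m, ENNReal.ofReal (F x) = ∫⁻ x in Ioo m b, ENNReal.ofReal (F x) :=
    (ENNReal.mul_right_inj two_ne_zero ENNReal.ofNat_ne_top).1 (hleft.symm.trans hright)
  rw [← Ioc_union_Ioo_eq_Ioo ham.le hmb,
    lintegral_union measurableSet_Ioo ((Ioc_disjoint_Ioi le_rfl).mono_right Ioo_subset_Ioi_self),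
    setLIntegral_congr Ioo_ae_eq_Ioc.symm, hhalves, ← two_mul, hright]

theorem setIntegral_Ioo_eq_of_fold {f f' F G : ℝ → ℝ} {a m b : ℝ} (ham : a < m) (hmb : m < b)
    (hfc : ContinuousOn f (Icc a b)) (hf : ∀ x ∈ Ioo a b, HasDerivAt f (f' x) x)
    (hf'_neg : ∀ x ∈ Ioo a m, f' x < 0) (hf'_pos : ∀ x ∈ Ioo m b, 0 < f' x) (hfab : f a = f b)
    (hFG : ∀ x ∈ Ioo a b, x ≠ m → |f' x| * G (f x) = 2 * F x)
    (hF : ∀ x, 0 ≤ F x) (hG : ∀ y, 0 ≤ G y)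
    (hFm : AEStronglyMeasurable F (volume.restrict (Ioo a b)))
    (hGm : AEStronglyMeasurable G (volume.restrict (Ioo (f m) (f b)))) :
    ∫ x in Ioo a b, F x = ∫ y in Ioo (f m) (f b), G y := by
  rw [integral_eq_lintegral_of_nonneg_ae (.of_forall hF) hFm,
    integral_eq_lintegral_of_nonneg_ae (.of_forall hG) hGm,
    lintegral_Ioo_eq_of_fold ham hmb hfc hf hf'_neg hf'_pos hfab hFG]

theorem abs_mul_one_div_sqrt_eq_two_mul {d p r : ℝ} (hd : d ≠ 0) (h : r = d ^ 2 * p / 4) :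
    |d| * (1 / √r) = 2 * (1 / √p) := by
  have hr : r = (|d| / 2) ^ 2 * p := by rw [h, div_pow, sq_abs]; ring
  rw [hr, Real.sqrt_mul (sq_nonneg _), Real.sqrt_sq (by positivity), ← one_div_mul_one_div,
    ← mul_assoc]
  congr 1
  field_simp

noncomputable def mobiusParam (k S c : ℝ) : ℝ := ((k + S) * c - k) / (k + (S - k) * c)

noncomputable def foldSubst (k S c : ℝ) : ℝ :=
  -12 + (k * S - k ^ 2 + 24) / 2 * mobiusParam k S c ^ 2

section
variable {k S c : ℝ}

theorem hasDerivAt_mobiusParam (hD : k + (S - k) * c ≠ 0) :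
    HasDerivAt (mobiusParam k S) (2 * k * S / (k + (S - k) * c) ^ 2) c := by
  have hN : HasDerivAt (fun c => (k + S) * c - k) (k + S) c := by
    simpa using ((hasDerivAt_id c).const_mul (k + S)).sub_const k
  have hD' : HasDerivAt (fun c => k + (S - k) * c) (S - k) c := by
    simpa using ((hasDerivAt_id c).const_mul (S - k)).const_add k
  refine (hN.div hD' hD).congr_deriv ?_
  ring

theorem hasDerivAt_foldSubst (hD : k + (S - k) * c ≠ 0) :
    HasDerivAt (foldSubst k S)
      ((k * S - k ^ 2 + 24) * (2 * k * S / (k + (S - k) * c) ^ 2) * mobiusParam k S c) c := by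
  refine ((((hasDerivAt_mobiusParam hD).pow 2).const_mul ((k * S - k ^ 2 + 24) / 2)).const_add
    (-12)).congr_deriv ?_
  ring

theorem mobiusParam_denom_pos (hk : 0 < k) (hkS : k < S) (hc : 0 ≤ c) :
    0 < k + (S - k) * c := by
  nlinarith

theorem mobiusParam_neg (hk : 0 < k) (hkS : k < S) (hc₀ : 0 ≤ c) (hc : c < k / (k + S)) :
    mobiusParam k S c < 0 := by
  have hN : (k + S) * c - k < 0 := by
    rw [lt_div_iff₀ (by linarith)] at hc; linarith
  exact div_neg_of_neg_of_pos hN (mobiusParam_denom_pos hk hkS hc₀)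

theorem mobiusParam_pos (hk : 0 < k) (hkS : k < S) (hc : k / (k + S) < c) :
    0 < mobiusParam k S c := by
  have hN : 0 < (k + S) * c - k := by
    rw [div_lt_iff₀ (by linarith)] at hc; linarith
  exact div_pos hN (mobiusParam_denom_pos hk hkS ((div_pos hk (by linarith)).le.trans hc.le))

theorem mobiusParam_ne_zero (hk : 0 < k) (hkS : k < S) (hc₀ : 0 ≤ c) (hc : c ≠ k / (k + S)) :
    mobiusParam k S c ≠ 0 := by
  rcases hc.lt_or_gt with hlt | hgt
  · exact (mobiusParam_neg hk hkS hc₀ hlt).ne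
  · exact (mobiusParam_pos hk hkS hgt).ne'

theorem mobiusParam_zero (hk : k ≠ 0) : mobiusParam k S 0 = -1 := by
  simp [mobiusParam, hk]

theorem mobiusParam_one (hS : S ≠ 0) : mobiusParam k S 1 = 1 := by
  simp [mobiusParam, hS]

theorem mobiusParam_div (hkS : k + S ≠ 0) : mobiusParam k S (k / (k + S)) = 0 := by
  simp [mobiusParam, mul_div_cancel₀ _ hkS]

theorem foldSubst_deriv_factor_pos (hk : 0 < k) (hkS : k < S) (hc : 0 ≤ c) :
    0 < (k * S - k ^ 2 + 24) * (2 * k * S / (k + (S - k) * c) ^ 2) := by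
  have hA : 0 < k * S - k ^ 2 + 24 := by nlinarith
  have hS : 0 < S := hk.trans hkS
  have := mobiusParam_denom_pos hk hkS hc
  positivity

theorem foldSubst_zero (hk : k ≠ 0) : foldSubst k S 0 = -k * (k - S) / 2 := by
  rw [foldSubst, mobiusParam_zero hk]; ring

theorem foldSubst_one (hS : S ≠ 0) : foldSubst k S 1 = -k * (k - S) / 2 := by
  rw [foldSubst, mobiusParam_one hS]; ring

theorem foldSubst_div (hkS : k + S ≠ 0) : foldSubst k S (k / (k + S)) = -12 := by
  rw [foldSubst, mobiusParam_div hkS]; ring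

theorem neg_mul_quadratic_foldSubst (hS : S ^ 2 = 16 + k ^ 2) (hD : k + (S - k) * c ≠ 0) :
    -(foldSubst k S c + 12) * (foldSubst k S c ^ 2 + k ^ 2 * foldSubst k S c - 4 * k ^ 2) =
      ((k * S - k ^ 2 + 24) * (2 * k * S / (k + (S - k) * c) ^ 2) * mobiusParam k S c) ^ 2 *
        (c * (1 - c) * (64 * c ^ 2 - 48 * c + k ^ 2)) / 4 := by
  set A := k * S - k ^ 2 + 24
  set B := k ^ 2 + k * S - 24
  set t := mobiusParam k S c
  set D := k + (S - k) * c
  set N := (k + S) * c - k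
  have ht : t * D = N := div_mul_cancel₀ _ hD
  have hfactor : ∀ v : ℝ, v ^ 2 + k ^ 2 * v - 4 * k ^ 2 = (v + 12 - A / 2) * (v + 12 + B / 2) := by
    intro v; linear_combination (k ^ 2 / 4) * hS
  have hv : foldSubst k S c + 12 = A / 2 * t ^ 2 := by simp only [foldSubst, A, t]; ring
  have h1 : 1 - t ^ 2 = 4 * k * S * (c * (1 - c)) / D ^ 2 := by
    rw [eq_div_iff (pow_ne_zero 2 hD)]
    linear_combination (-(t * D + N)) * ht
  have h2 : A * t ^ 2 + B = 2 * k * S * (64 * c ^ 2 - 48 * c + k ^ 2) / D ^ 2 := by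
    rw [eq_div_iff (pow_ne_zero 2 hD)]
    linear_combination A * (t * D + N) * ht + 2 * k * S * c ^ 2 * hS
  rw [hfactor, hv]
  linear_combination (A ^ 2 * t ^ 2 / 8) *
    ((A * t ^ 2 + B) * h1 + 4 * k * S * (c * (1 - c)) / D ^ 2 * h2)

end

theorem stmt_13_general (k : ℝ) (hk : 0 < k) :
    ∫ c in Set.Ioo (0 : ℝ) 1,
        1 / Real.sqrt (c * (1 - c) * (64 * c ^ 2 - 48 * c + k ^ 2)) =
    ∫ v in Set.Ioo (-12 : ℝ) (-k * (k - Real.sqrt (16 + k ^ 2)) / 2),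
        1 / Real.sqrt (-(v + 12) * (v ^ 2 + k ^ 2 * v - 4 * k ^ 2)) := by
  set S := Real.sqrt (16 + k ^ 2)
  have hS : S ^ 2 = 16 + k ^ 2 := Real.sq_sqrt (by positivity)
  have hS0 : 0 < S := Real.sqrt_pos.2 (by positivity)
  have hkS : k < S := by nlinarith
  have hm0 : 0 < k / (k + S) := by positivity
  have hm1 : k / (k + S) < 1 := (div_lt_one (by positivity)).2 (by linarith)
  have hD (c : ℝ) (hc : 0 ≤ c) : k + (S - k) * c ≠ 0 := (mobiusParam_denom_pos hk hkS hc).ne'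
  rw [← foldSubst_div (by positivity : k + S ≠ 0), ← foldSubst_one hS0.ne']
  exact setIntegral_Ioo_eq_of_fold hm0 hm1
    (fun c hc => (hasDerivAt_foldSubst (hD c hc.1)).continuousAt.continuousWithinAt)
    (fun c hc => hasDerivAt_foldSubst (hD c hc.1.le))
    (fun c hc => mul_neg_of_pos_of_neg (foldSubst_deriv_factor_pos hk hkS hc.1.le)
      (mobiusParam_neg hk hkS hc.1.le hc.2))
    (fun c hc => mul_pos (foldSubst_deriv_factor_pos hk hkS (hm0.trans hc.1).le)
      (mobiusParam_pos hk hkS hc.1))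
    (by rw [foldSubst_zero hk.ne', foldSubst_one hS0.ne'])
    (fun c hc hcm => abs_mul_one_div_sqrt_eq_two_mul
      (mul_ne_zero (foldSubst_deriv_factor_pos hk hkS hc.1.le).ne'
        (mobiusParam_ne_zero hk hkS hc.1.le hcm))
      (neg_mul_quadratic_foldSubst hS (hD c hc.1.le)))
    (fun _ => by positivity) (fun _ => by positivity)
    (by fun_prop : Measurable _).aestronglyMeasurable
    (by fun_prop : Measurable _).aestronglyMeasurable

theorem stmt_13 (k : ℝ) (hk : 0 < k) (hk3 : k ≠ 3) :
    ∫ c in Set.Ioo (0 : ℝ) 1,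
        1 / Real.sqrt (c * (1 - c) * (64 * c ^ 2 - 48 * c + k ^ 2)) =
    ∫ v in Set.Ioo (-12 : ℝ) (-k * (k - Real.sqrt (16 + k ^ 2)) / 2),
        1 / Real.sqrt (-(v + 12) * (v ^ 2 + k ^ 2 * v - 4 * k ^ 2)) :=
  stmt_13_general k hk
end

section
/- The complex number x₁ = (3 + i√(5 + 2√13))/(1 + √13) has absolute value 1 and is a root of x⁴ + x³ - x² + x + 1 = 0. -/
/-!
The quartic is palindromic: it factors as `(x² - u x + 1)(x² + (u + 1) x + 1)` whenever
`u² + u = 3`. A point `x` of the unit circle satisfies `x² - 2 Re(x) x + 1 = 0`, so it is a root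
as soon as `u = 2 Re(x)` solves `u² + u = 3`. For `x₁` one has `|3 + i√(5 + 2√13)|² = 14 + 2√13
= (1 + √13)²`, and `2 Re(x₁) = 6 / (1 + √13) = (√13 - 1) / 2` is the positive root of `u² + u = 3`.
-/

open Complex ComplexConjugate

theorem quartic_eq_zero_of_sq_sub_mul_add_one_eq_zero {R : Type*} [CommRing R] {x u : R}
    (hu : u ^ 2 + u = 3) (hx : x ^ 2 - u * x + 1 = 0) :
    x ^ 4 + x ^ 3 - x ^ 2 + x + 1 = 0 := by
  linear_combination (x ^ 2 + (u + 1) * x + 1) * hx + x ^ 2 * hu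

theorem Complex.sq_sub_two_re_mul_add_one_eq_zero {x : ℂ} (hx : ‖x‖ = 1) :
    x ^ 2 - 2 * x.re * x + 1 = 0 := by
  have hconj : x * conj x = 1 := by rw [mul_conj, normSq_eq_norm_sq, hx]; norm_num
  have hre : x + conj x = 2 * x.re := by rw [add_conj]; push_cast; rfl
  linear_combination x * hre - hconj

theorem Complex.quartic_eq_zero_of_norm_eq_one {x : ℂ} (hx : ‖x‖ = 1)
    (hre : (2 * x.re) ^ 2 + 2 * x.re = 3) :
    x ^ 4 + x ^ 3 - x ^ 2 + x + 1 = 0 :=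
  quartic_eq_zero_of_sq_sub_mul_add_one_eq_zero (u := (2 * x.re : ℂ))
    (by exact_mod_cast hre) (sq_sub_two_re_mul_add_one_eq_zero hx)

theorem stmt_16 :
    let x₁ : ℂ := (3 + Complex.I * Real.sqrt (5 + 2 * Real.sqrt 13)) / (1 + Real.sqrt 13)
    ‖x₁‖ = 1 ∧ x₁ ^ 4 + x₁ ^ 3 - x₁ ^ 2 + x₁ + 1 = 0 := by
  intro x₁
  set s := Real.sqrt 13
  set t := Real.sqrt (5 + 2 * s)
  have hs : s ^ 2 = 13 := Real.sq_sqrt (by norm_num)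
  have hs0 : 0 < s := by positivity
  have ht : t ^ 2 = 5 + 2 * s := Real.sq_sqrt (by positivity)
  have hx₁ : x₁ = ((3 : ℝ) + t * I) / ((1 + s : ℝ) : ℂ) := by
    simp only [x₁]; push_cast; ring
  have hnorm : ‖x₁‖ = 1 := by
    rw [hx₁, Complex.norm_div, norm_add_mul_I, norm_real, Real.norm_of_nonneg (by positivity),
      div_eq_one_iff_eq (by positivity),
      Real.sqrt_eq_iff_mul_self_eq (by positivity) (by positivity)]
    linear_combination ht - hs
  have hre : x₁.re = 3 / (1 + s) := by
    rw [hx₁, div_ofReal_re]; simp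
  refine ⟨hnorm, quartic_eq_zero_of_norm_eq_one hnorm ?_⟩
  rw [hre]
  field_simp
  linear_combination -hs
end
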